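/- Let X, Y be symmetric N×N matrices with [[X,0],[0,Y]] ≤ m·[[I,−I],[−I,I]] in the Loewner order, let a : ℝ^N → ℝ be Lipschitz with Lipschitz constant L and a(z) ≥ a₀ > 0 for all z, and let Θ be any diagonal N×N matrix with nonnegative entries θ_i ≤ |p|^{α/2} coming from p ∈ ℝ^N (i.e. Θ = Θ_α(p) with (Θ)_{ii} = |p_i|^{α/2}). Then for any x, y ∈ ℝ^N: √(a(x))·Θ X Θ·√(a(x)) + √(a(y))·Θ Y Θ·√(a(y)) ≤ (L²/(4a₀))·m·|x−y|²·Θ² in the Loewner order. -/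

import Mathlib

open Matrix

set_option maxHeartbeats 1600000 in
/-- If [[X,0],[0,Y]] ≤ m[[I,−I],[−I,I]], a is Lipschitz with constant L and a ≥ a₀ > 0,
and Θ = Θ_α(p) is the diagonal matrix with entries |p_i|^{α/2}, then
√(a x)·ΘXΘ·√(a x) + √(a y)·ΘYΘ·√(a y) ≤ (L²/(4a₀))·m·|x−y|²·Θ² in the Loewner order. -/
theorem stmt6 (N : ℕ) (α : ℝ) (hα : 0 < α) (p : Fin N → ℝ)
    (Θ : Matrix (Fin N) (Fin N) ℝ)
    (hΘ : Θ = Matrix.diagonal fun i => |p i| ^ (α / 2))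
    (X Y : Matrix (Fin N) (Fin N) ℝ) (hX : X.IsHermitian) (hY : Y.IsHermitian)
    (m : ℝ) (hm : 0 < m)
    (h : (m • Matrix.fromBlocks (1 : Matrix (Fin N) (Fin N) ℝ) (-1) (-1) 1
        - Matrix.fromBlocks X 0 0 Y).PosSemidef)
    (a : EuclideanSpace ℝ (Fin N) → ℝ) (L a₀ : ℝ) (ha₀ : 0 < a₀)
    (haLip : ∀ x y, |a x - a y| ≤ L * ‖x - y‖) (hlb : ∀ z, a₀ ≤ a z)
    (x y : EuclideanSpace ℝ (Fin N)) :
    ((L ^ 2 / (4 * a₀) * m * ‖x - y‖ ^ 2) • (Θ * Θ)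
      - (Real.sqrt (a x) • Real.sqrt (a x) • (Θ * X * Θ)
          + Real.sqrt (a y) • Real.sqrt (a y) • (Θ * Y * Θ))).PosSemidef := by
  have hsym : Θ.IsHermitian := by
    rw [hΘ]; exact Matrix.isHermitian_diagonal _
  have hT : Θᵀ = Θ := by simpa using hsym.eq
  have hXT : Xᵀ = X := by simpa using hX.eq
  have hYT : Yᵀ = Y := by simpa using hY.eq
  set s := Real.sqrt (a x) with hs
  set t := Real.sqrt (a y) with ht
  have hax : 0 < a x := lt_of_lt_of_le ha₀ (hlb x)
  have hay : 0 < a y := lt_of_lt_of_le ha₀ (hlb y)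
  have hs0 : Real.sqrt a₀ ≤ s := Real.sqrt_le_sqrt (hlb x)
  have ht0 : Real.sqrt a₀ ≤ t := Real.sqrt_le_sqrt (hlb y)
  have hr0 : 0 ≤ Real.sqrt a₀ := Real.sqrt_nonneg _
  have ha0s : Real.sqrt a₀ ^ 2 = a₀ := Real.sq_sqrt ha₀.le
  have hs2 : s ^ 2 = a x := Real.sq_sqrt hax.le
  have ht2 : t ^ 2 = a y := Real.sq_sqrt hay.le
  have hL : |a x - a y| ≤ L * ‖x - y‖ := haLip x y
  have hkey : (s - t) ^ 2 * (4 * a₀) ≤ L ^ 2 * ‖x - y‖ ^ 2 := by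
    have h2 : (s - t) ^ 2 * (s + t) ^ 2 ≤ (L * ‖x - y‖) ^ 2 := by
      nlinarith [abs_nonneg (a x - a y), sq_abs (a x - a y), hL, hs2, ht2]
    have h3 : 4 * a₀ ≤ (s + t) ^ 2 := by nlinarith
    nlinarith [sq_nonneg (s - t)]
  rw [Matrix.posSemidef_iff_dotProduct_mulVec]
  constructor
  · show _ = _
    simp only [Matrix.conjTranspose_sub, Matrix.conjTranspose_add, Matrix.conjTranspose_smul,
      Matrix.conjTranspose_mul, Matrix.conjTranspose_eq_transpose_of_trivial,
      Matrix.transpose_sub, Matrix.transpose_add, Matrix.transpose_smul, Matrix.transpose_mul,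
      hT, hXT, hYT, star_trivial, Matrix.mul_assoc]
  · intro v
    set u : Fin N → ℝ := Θ *ᵥ v with hu
    have hq := (Matrix.posSemidef_iff_dotProduct_mulVec.mp h).2 (Sum.elim (s • u) (t • u))
    rw [Matrix.sub_mulVec, Matrix.smul_mulVec, Matrix.fromBlocks_mulVec,
        Matrix.fromBlocks_mulVec] at hq
    simp only [Sum.elim_comp_inl, Sum.elim_comp_inr, Matrix.one_mulVec, Matrix.neg_mulVec,
      Matrix.zero_mulVec, add_zero, zero_add, star_trivial, Matrix.mulVec_smul,
      Matrix.smul_mulVec, dotProduct_sub, dotProduct_smul,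
      sumElim_dotProduct_sumElim, dotProduct_add, dotProduct_neg,
      smul_dotProduct, smul_eq_mul, smul_neg, dotProduct_zero, mul_zero,
      dotProduct_smul] at hq
    have hq' : 0 ≤ m * ((s - t) ^ 2 * (u ⬝ᵥ u)) -
        (s ^ 2 * (u ⬝ᵥ X *ᵥ u) + t ^ 2 * (u ⬝ᵥ Y *ᵥ u)) := by nlinarith [hq]
    have hvm : v ᵥ* Θ = u := by
      nth_rewrite 1 [← hT]
      exact Matrix.vecMul_transpose Θ v
    have hvu : ∀ M : Matrix (Fin N) (Fin N) ℝ, v ⬝ᵥ (Θ * M * Θ) *ᵥ v = u ⬝ᵥ M *ᵥ u := by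
      intro M
      rw [← Matrix.mulVec_mulVec, ← Matrix.mulVec_mulVec, Matrix.dotProduct_mulVec, hvm]
    have hvv : v ⬝ᵥ (Θ * Θ) *ᵥ v = u ⬝ᵥ u := by
      rw [← Matrix.mulVec_mulVec, Matrix.dotProduct_mulVec, hvm]
    have huu : (0:ℝ) ≤ u ⬝ᵥ u := by
      simpa using dotProduct_self_star_nonneg u
    simp only [star_trivial, Matrix.sub_mulVec, Matrix.add_mulVec, Matrix.smul_mulVec,
      dotProduct_sub, dotProduct_add, dotProduct_smul, smul_eq_mul]
    rw [hvv, hvu X, hvu Y]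
    have hdiv : (s - t) ^ 2 ≤ L ^ 2 / (4 * a₀) * ‖x - y‖ ^ 2 := by
      rw [div_mul_eq_mul_div, le_div_iff₀ (by positivity)]
      linarith
    have h5 : m * ((s - t) ^ 2 * (u ⬝ᵥ u)) ≤
        L ^ 2 / (4 * a₀) * m * ‖x - y‖ ^ 2 * (u ⬝ᵥ u) := by
      have h6 := mul_le_mul_of_nonneg_right hdiv huu
      nlinarith [hm.le]
    clear hq hvm hvu hvv
    generalize hg1 : u ⬝ᵥ u = uu at hq' h5 ⊢
    generalize hg2 : u ⬝ᵥ X *ᵥ u = rX at hq' ⊢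
    generalize hg3 : u ⬝ᵥ Y *ᵥ u = rY at hq' ⊢
    generalize hg4 : ‖x - y‖ = n at h5 ⊢
    clear_value s t u
    clear hg1 hg2 hg3 hg4 hu huu hdiv hL hkey hs2 ht2 hs0 ht0 ha0s hr0 hax hay h haLip hlb
      hΘ hsym hT hXT hYT hX hY hs ht
    rw [show s * (s * rX) = s ^ 2 * rX by ring, show t * (t * rY) = t ^ 2 * rY by ring]
    linarith [hq', h5]
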